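/- arXiv:1705.09006 — 2 statements merged into one kernel-verified Lean document; each statement's English description precedes it below -/
import Mathlib

section
/- Over any field k of characteristic different from 3, the map ψ sending (y0:y1:y2:y3:y4) on the Burkhardt quartic B to (t0:t1:t2:t3) with t0 = y0*(y0^2-y0*y1+y1^2), t1 = y0*(y1*y2-y0*y3-y0*y4), t2 = y0*(y0*y2-y1*y2+y1*y3+y1*y4), t3 = y0*y1*y2-y0*y1*y3+y1^2*y3-y0^2*y4 is a birational inverse of the explicit parametrization φ: P^3 --> B; in particular the composition ψ∘φ is the identity on a dense open subset of P^3. -/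
open MvPolynomial

namespace BurkhardtBirational

variable (k : Type) [Field k]

/-- `t₁, t₂, t₃` as generators of `k[t₁,t₂,t₃]`. -/
noncomputable def t1 : MvPolynomial (Fin 3) k := X 0
noncomputable def t2 : MvPolynomial (Fin 3) k := X 1
noncomputable def t3 : MvPolynomial (Fin 3) k := X 2

/-- The components `ỹ₀,…,ỹ₄` of the parametrization `φ : ℙ³ ⤏ B` on the chart `(1:t₁:t₂:t₃)`. -/
noncomputable def y0 : MvPolynomial (Fin 3) k :=
  t1 k^3 - 3*t1 k^2*t3 k - 3*t1 k*t2 k^2 - 3*t1 k*t2 k*t3 k - t2 k^3 - 1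
noncomputable def y1 : MvPolynomial (Fin 3) k :=
  -t1 k^3 + 3*t1 k^2*t3 k - 3*t1 k*t3 k^2 + t2 k^3 + 1
noncomputable def y2 : MvPolynomial (Fin 3) k :=
  -t1 k^4 + t1 k^3*t2 k + 3*t1 k^3*t3 k - 3*t1 k^2*t2 k*t3 k - 3*t1 k^2*t3 k^2
    - 2*t1 k*t2 k^3 - 3*t1 k*t2 k^2*t3 k + t1 k - t2 k^4 - t2 k
noncomputable def y3 : MvPolynomial (Fin 3) k :=
  -t1 k^4 + 4*t1 k^3*t3 k + 3*t1 k^2*t2 k^2 + 3*t1 k^2*t2 k*t3 k - 3*t1 k^2*t3 k^2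
    + t1 k*t2 k^3 - 3*t1 k*t2 k^2*t3 k - 3*t1 k*t2 k*t3 k^2 + t1 k - t2 k^3*t3 k - t3 k
noncomputable def y4 : MvPolynomial (Fin 3) k :=
  -t1 k^4 - t1 k^3*t2 k + 2*t1 k^3*t3 k + 3*t1 k^2*t2 k*t3 k + t1 k*t2 k^3
    + 3*t1 k*t2 k^2*t3 k + t1 k + t2 k^4 + t2 k^3*t3 k + t2 k + t3 k

/-- The four components of `ψ : B ⤏ ℙ³`, applied to the parametrization `φ`. -/
noncomputable def s0 : MvPolynomial (Fin 3) k := y0 k * (y0 k^2 - y0 k * y1 k + y1 k^2)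
noncomputable def s1 : MvPolynomial (Fin 3) k :=
  y0 k * (y1 k * y2 k - y0 k * y3 k - y0 k * y4 k)
noncomputable def s2 : MvPolynomial (Fin 3) k :=
  y0 k * (y0 k * y2 k - y1 k * y2 k + y1 k * y3 k + y1 k * y4 k)
noncomputable def s3 : MvPolynomial (Fin 3) k :=
  y0 k * y1 k * y2 k - y0 k * y1 k * y3 k + y1 k^2 * y3 k - y0 k^2 * y4 k

/-- Over any field `k` of characteristic `≠ 3`, the map `ψ` given by the cubics
`t₀ = y₀(y₀²-y₀y₁+y₁²)`, `t₁ = y₀(y₁y₂-y₀y₃-y₀y₄)`, `t₂ = y₀(y₀y₂-y₁y₂+y₁y₃+y₁y₄)`,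
`t₃ = y₀y₁y₂-y₀y₁y₃+y₁²y₃-y₀²y₄` is a birational inverse of the parametrization `φ`:
substituting `φ` into `ψ` gives `(λ : λ·t₁ : λ·t₂ : λ·t₃)` for a common nonzero polynomial
factor `λ`, so `ψ ∘ φ` is the identity on a dense open subset of `ℙ³`. -/
theorem psi_comp_phi_is_identity (h3 : (3 : k) ≠ 0) :
    ∃ lam : MvPolynomial (Fin 3) k, lam ≠ 0 ∧
      s0 k = lam ∧ s1 k = lam * t1 k ∧ s2 k = lam * t2 k ∧ s3 k = lam * t3 k := by
  refine ⟨s0 k, ?_, rfl, ?_, ?_, ?_⟩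
  · intro h
    have h0 : eval (fun _ => (0:k)) (s0 k) = -3 := by
      simp [s0, y0, y1, t1, t2, t3]
      ring
    rw [h] at h0
    simp at h0
    exact h3 h0
  all_goals simp only [s0, s1, s2, s3, y0, y1, y2, y3, y4, t1, t2, t3]; ring

end BurkhardtBirational
end

section
/- Over a field k of characteristic ≠ 2, let C: y^2 = F(x) be a genus 2 curve with F squarefree of degree 6. Suppose F(x) = G(x)^2 + 4λ H(x)^3 with deg G = 3, deg H = 2, λ ∈ k*, and gcd(G,H)=1. Let D1 be the effective degree 2 divisor cut out by H(x) = 0, y = G(x), and let κ be the canonical divisor supported at infinity. Then the divisor class [D1 - κ] ∈ Pic^0(C) has order dividing 3; in fact 3(D1 - κ) is the divisor of the function (y - G(x)). -/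
/-!
In `A = k[x,y]/(y² - F)` put `u = y - G`. Then `u (u + 2G) = y² - G² = 4λH³`, so `H³ ∈ (u)` and
`(H, u)³ ⊆ (u)`. Conversely, modulo `u + 2G` the ideal `(H, u)` contains `H` and `2G`, hence is the
unit ideal since `G, H` are coprime and `2` is invertible; so `(H, u)² + (u + 2G) = A` and
`u ∈ u (H, u)² + (u (u + 2G)) ⊆ (H, u)³`.
-/

open MvPolynomial

/-- Embed `k[x]` into `k[x,y] = MvPolynomial (Fin 2) k` via `x ↦ X 0`. -/
noncomputable def toXY {k : Type} [Field k] : Polynomial k →ₐ[k] MvPolynomial (Fin 2) k :=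
  Polynomial.aeval (X 0)

namespace Ideal

variable {R : Type*} [CommRing R]

theorem sup_pow_le_pow_sup (I J : Ideal R) (n : ℕ) : (I ⊔ J) ^ n ≤ I ^ n ⊔ J := by
  induction n with
  | zero => simp
  | succ n ih =>
    calc (I ⊔ J) ^ (n + 1) = (I ⊔ J) ^ n * (I ⊔ J) := pow_succ _ _
      _ ≤ (I ^ n ⊔ J) * (I ⊔ J) := mul_mono_left ih
      _ = I ^ n * I ⊔ I ^ n * J ⊔ (J * I ⊔ J * J) := by rw [sup_mul, mul_sup, mul_sup]
      _ ≤ I ^ (n + 1) ⊔ J := by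
        rw [← pow_succ]
        exact sup_le (sup_le le_sup_left (le_sup_of_le_right mul_le_right))
          (le_sup_of_le_right (sup_le mul_le_left mul_le_left))

theorem span_pair_pow_le_span_singleton {h u : R} {n : ℕ} (hn : h ^ n ∈ span {u}) :
    span {h, u} ^ n ≤ span {u} := by
  rw [span_insert]
  refine (sup_pow_le_pow_sup _ _ n).trans (sup_le ?_ le_rfl)
  rwa [span_singleton_pow, span_singleton_le_iff_mem]

theorem mem_pow_of_mul_mem_pow {J : Ideal R} {u v : R} {n : ℕ} (hJv : J ⊔ span {v} = ⊤)
    (hu : u ∈ J) (huv : u * v ∈ J ^ (n + 1)) : u ∈ J ^ (n + 1) := by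
  have h1 : (1 : R) ∈ J ^ n ⊔ span {v} := by rw [pow_sup_eq_top hJv]; exact Submodule.mem_top
  obtain ⟨a, ha, b, hb, hab⟩ := Submodule.mem_sup.1 h1
  obtain ⟨r, rfl⟩ := mem_span_singleton'.1 hb
  rw [show u = u * a + r * (u * v) by linear_combination (-u) * hab, pow_succ']
  exact add_mem (mul_mem_mul hu ha) (mul_mem_left _ _ (pow_succ' J n ▸ huv))

end Ideal

open Ideal in
theorem span_pair_pow_three_eq_span_singleton {R : Type*} [CommRing R] {g h u c : R}
    (h2 : IsUnit (2 : R)) (hc : IsUnit c) (hgh : IsCoprime g h)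
    (rel : u * (u + 2 * g) = c * h ^ 3) : span {h, u} ^ 3 = span {u} := by
  apply le_antisymm
  · refine span_pair_pow_le_span_singleton (mem_span_singleton'.2 ⟨hc.unit⁻¹ * (u + 2 * g), ?_⟩)
    rw [mul_assoc, mul_comm _ u, rel, ← mul_assoc, hc.val_inv_mul, one_mul]
  · have huJ : u ∈ span {h, u} := subset_span (by simp)
    have hhJ : h ∈ span {h, u} := subset_span (by simp)
    obtain ⟨a, b, hab⟩ := hgh
    have hcop : span {h, u} ⊔ span {u + 2 * g} = ⊤ := by
      rw [eq_top_iff_one, Submodule.mem_sup]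
      refine ⟨b * h - a * h2.unit⁻¹ * u, ?_, a * h2.unit⁻¹ * (u + 2 * g), ?_, ?_⟩
      · exact sub_mem (mul_mem_left _ _ hhJ) (mul_mem_left _ _ huJ)
      · exact mul_mem_left _ _ (mem_span_singleton_self _)
      · linear_combination hab + a * g * h2.val_inv_mul
    rw [span_singleton_le_iff_mem]
    refine mem_pow_of_mul_mem_pow (n := 2) hcop huJ ?_
    rw [rel]
    exact mul_mem_left _ _ (pow_mem_pow hhJ 3)

/-- The divisor identity `3(D₁ - κ) = div((y - G)/z³)`, read on the affine chart
`k[x,y]/(y² - F)`, where `κ` is not visible. -/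
theorem three_torsion_from_decomposition_general (k : Type) [Field k] (h2 : (2 : k) ≠ 0)
    (F G H : Polynomial k) (lam : k)
    (hlam : lam ≠ 0)
    (hcop : IsCoprime G H)
    (hdec : F = G ^ 2 + Polynomial.C (4 * lam) * H ^ 3) :
    letI I : Ideal (MvPolynomial (Fin 2) k) := Ideal.span {(X 1) ^ 2 - toXY F}
    (Ideal.span {Ideal.Quotient.mk I (toXY H),
        Ideal.Quotient.mk I (X 1 - toXY G)}) ^ 3
      = Ideal.span {Ideal.Quotient.mk I (X 1 - toXY G)} := by
  set I : Ideal (MvPolynomial (Fin 2) k) := Ideal.span {(X 1) ^ 2 - toXY F}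
  set φ := (Ideal.Quotient.mkₐ k I).comp toXY
  have hy : Ideal.Quotient.mk I (X 1 ^ 2) = φ F :=
    Ideal.Quotient.eq.2 (Ideal.subset_span rfl)
  have h4lam : (4 * lam : k) ≠ 0 := mul_ne_zero (by simpa [show (4 : k) = 2 * 2 by norm_num]) hlam
  refine span_pair_pow_three_eq_span_singleton (g := φ G) (c := algebraMap k _ (4 * lam)) ?_
    ((IsUnit.mk0 _ h4lam).map _) (hcop.map φ.toRingHom) ?_
  · have := (IsUnit.mk0 _ h2).map (algebraMap k (MvPolynomial (Fin 2) k ⧸ I))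
    rwa [map_ofNat] at this
  · calc _ = Ideal.Quotient.mk I (X 1 ^ 2) - φ G ^ 2 := by simp [φ]; ring
      _ = _ := by
        rw [hy, hdec, map_add, map_mul, map_pow, map_pow, ← Polynomial.algebraMap_eq,
          AlgHom.commutes, add_sub_cancel_left]
        rfl

/-- Let `C : y² = F(x)` be a genus-2 curve over a field `k` of characteristic `≠ 2`, with `F`
squarefree of degree `6`, and suppose `F = G² + 4λH³` with `deg G = 3`, `deg H = 2`, `λ ≠ 0`
and `gcd(G,H) = 1`.  Let `D₁` be the effective degree-2 divisor cut out by `H(x) = 0`,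
`y = G(x)`, and `κ` the canonical divisor at infinity.  Then `3(D₁ - κ)` is the divisor of
the function `(y - G(x))/z³`; on the affine coordinate ring `k[x,y]/(y² - F)` this is the
ideal identity `(H, y - G)³ = (y - G)`, so the class `[D₁ - κ] ∈ Pic⁰(C)` has order
dividing `3`. -/
theorem three_torsion_from_decomposition (k : Type) [Field k] (h2 : (2 : k) ≠ 0)
    (F G H : Polynomial k) (lam : k)
    (hFsf : Squarefree F) (hFdeg : F.natDegree = 6)
    (hGdeg : G.natDegree = 3) (hHdeg : H.natDegree = 2) (hlam : lam ≠ 0)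
    (hcop : IsCoprime G H)
    (hdec : F = G ^ 2 + Polynomial.C (4 * lam) * H ^ 3) :
    letI I : Ideal (MvPolynomial (Fin 2) k) := Ideal.span {(X 1) ^ 2 - toXY F}
    (Ideal.span {Ideal.Quotient.mk I (toXY H),
        Ideal.Quotient.mk I (X 1 - toXY G)}) ^ 3
      = Ideal.span {Ideal.Quotient.mk I (X 1 - toXY G)} :=
  three_torsion_from_decomposition_general k h2 F G H lam hlam hcop hdec
end
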